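/- Let A be a simple, unital, infinite-dimensional C*-algebra, m ≥ 1, and φ̄, ψ̄ ∈ P_m(A). Let 𝔊 be a filter on E_{A°}(φ̄,ψ̄) such that for all finite F, G ⊆ A° and all ε > 0, δ > 0 there is p ∈ 𝔊 with F ⊆ F_p, G ⊆ G_p, ε_p ≤ ε, and δ_p ≤ δ. Then: (i) for every a ∈ A the limits Φ_L(a) := lim_{p∈𝔊} v_p a v_p* and Φ_R(a) := lim_{p∈𝔊} w_p a w_p* exist in norm; (ii) Φ_L and Φ_R are *-automorphisms of A, with Φ_L^{-1}(a) = lim_{p∈𝔊} v_p* a v_p and Φ_R^{-1}(a) = lim_{p∈𝔊} w_p* a w_p; (iii) the automorphism Φ_𝔊 := Φ_L ∘ Φ_R^{-1} is approximately inner; and (iv) φ_i ∘ Φ_𝔊 = ψ_i for every i < m. -/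

import Mathlib

/-!
Genericity of `𝔊` puts every element `b` of the dense set `A₀` eventually into `F_p` with `ε_p`
arbitrarily small, and the order on conditions forces `‖Ad v_q b - Ad v_p b‖ ≤ ε_p - ε_q` for
`b ∈ F_p`. As conjugation by a unitary is an isometry, `Ad v_p a` and `Ad v_p* a` are Cauchy along
`𝔊` for every `a`, and their limits are mutually inverse *-automorphisms; likewise for `w_p`.
The automorphism `Φ_L ∘ Φ_R⁻¹` is the pointwise limit of `Ad (v_p w_p*)`, hence approximately
inner. Finally each condition forces `|φ_i (Ad v_p b) - ψ_i (Ad w_p b)| < δ_p` for `b ∈ G_p`, so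
the continuous maps `φ_i ∘ Φ_L` and `ψ_i ∘ Φ_R` agree on `A₀`, hence everywhere.
-/

open scoped ComplexOrder

noncomputable section

variable {A : Type*} [NormedRing A] [StarRing A] [CStarRing A]
  [NormedAlgebra ℂ A] [StarModule ℂ A] [CompleteSpace A]

def IsState (φ : A →L[ℂ] ℂ) : Prop :=
  φ 1 = 1 ∧ ∀ a : A, 0 ≤ φ (star a * a)

def IsPureState (φ : A →L[ℂ] ℂ) : Prop :=
  IsState φ ∧ ∀ ψ₁ ψ₂ : A →L[ℂ] ℂ, IsState ψ₁ → IsState ψ₂ →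
    ∀ t : ℝ, 0 < t → t < 1 →
      φ = (t : ℂ) • ψ₁ + ((1 - t : ℝ) : ℂ) • ψ₂ → ψ₁ = φ ∧ ψ₂ = φ

def AdL (u : A) : A →L[ℂ] A :=
  (ContinuousLinearMap.mul ℂ A u).comp ((ContinuousLinearMap.mul ℂ A).flip (star u))

def UEquiv (φ ψ : A →L[ℂ] ℂ) : Prop :=
  ∃ u ∈ unitary A, ψ = φ.comp (AdL u)

def IsPmTuple {m : ℕ} (φ : Fin m → (A →L[ℂ] ℂ)) : Prop :=
  (∀ i, IsPureState (φ i)) ∧ ∀ i j, i ≠ j → ¬ UEquiv (φ i) (φ j)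

def BallP {m : ℕ} (φ : Fin m → (A →L[ℂ] ℂ)) (G : Finset A) (δ : ℝ) :
    Set (Fin m → (A →L[ℂ] ℂ)) :=
  {ψ | IsPmTuple ψ ∧ ∀ b ∈ G, ∀ i, ‖φ i b - ψ i b‖ < δ}

def InWeakClosure {m : ℕ} (S : Set (Fin m → (A →L[ℂ] ℂ)))
    (ψ : Fin m → (A →L[ℂ] ℂ)) : Prop :=
  ∀ (G : Finset A) (δ : ℝ), 0 < δ →
    ∃ χ ∈ S, ∀ b ∈ G, ∀ i, ‖ψ i b - χ i b‖ < δ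

def AdOrbit {m : ℕ} (φ : Fin m → (A →L[ℂ] ℂ)) (F : Finset A) (ε : ℝ) :
    Set (Fin m → (A →L[ℂ] ℂ)) :=
  {ψ | ∃ u ∈ unitary A, (∀ b ∈ F, ‖u * b - b * u‖ < ε) ∧
    ψ = fun i => (φ i).comp (AdL u)}

def IsSimpleCStar (A : Type*) [NormedRing A] [StarRing A] [CStarRing A]
    [NormedAlgebra ℂ A] [StarModule ℂ A] [CompleteSpace A] : Prop :=
  ∀ I : TwoSidedIdeal A, IsClosed (I : Set A) → I = ⊥ ∨ I = ⊤

def IsGoodPair {m : ℕ} (φ : Fin m → (A →L[ℂ] ℂ)) (F : Finset A) (ε : ℝ)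
    (G : Finset A) (δ : ℝ) : Prop :=
  0 < δ ∧ ∀ l : ℕ, 1 ≤ l → ∀ ρ : Fin l → (A →L[ℂ] ℂ), IsPmTuple ρ →
    IsPmTuple (Fin.append φ ρ) →
    ∃ ρ' : Fin l → (A →L[ℂ] ℂ), IsPmTuple ρ' ∧ (∀ i, UEquiv (ρ i) (ρ' i)) ∧
      ∀ χ ∈ BallP (Fin.append φ ρ') G δ,
        InWeakClosure (AdOrbit (Fin.append φ ρ') F ε) χ
/-- A norm-dense `ℚ + iℚ`-subalgebra of `A`, closed under adjoints, whose unitaries are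
norm-dense in the unitary group of `A`. -/
structure IsQiQSubalgebra (A₀ : Set A) : Prop where
  dense : Dense A₀
  add_mem : ∀ {a b : A}, a ∈ A₀ → b ∈ A₀ → a + b ∈ A₀
  mul_mem : ∀ {a b : A}, a ∈ A₀ → b ∈ A₀ → a * b ∈ A₀
  smul_mem : ∀ (s t : ℚ) {a : A}, a ∈ A₀ → (((s : ℂ) + (t : ℂ) * Complex.I) • a) ∈ A₀
  star_mem : ∀ {a : A}, a ∈ A₀ → star a ∈ A₀
  unitary_dense : ∀ u ∈ unitary A, ∀ ε : ℝ, 0 < ε →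
    ∃ v, v ∈ A₀ ∧ v ∈ unitary A ∧ ‖v - u‖ < ε

/-- The raw data of a condition in the forcing notion `E_{A°}(φ̄, ψ̄)`. -/
structure Cond (A : Type*) where
  F : Finset A
  G : Finset A
  ε : ℝ
  δ : ℝ
  v : A
  w : A

/-- Membership in the forcing notion `E_{A°}(φ̄, ψ̄)`. -/
def IsCond {m : ℕ} (A₀ : Set A) (φ ψ : Fin m → (A →L[ℂ] ℂ)) (q : Cond A) : Prop :=
  letI := Classical.decEq A
  (↑q.F ⊆ A₀) ∧ (↑q.G ⊆ A₀) ∧ 0 < q.ε ∧ 0 < q.δ ∧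
  (q.v ∈ unitary A ∧ q.v ∈ A₀) ∧ (q.w ∈ unitary A ∧ q.w ∈ A₀) ∧
  IsGoodPair (fun i => (φ i).comp (AdL q.v))
    (q.F ∪ q.F.image fun b => star q.v * b * q.v) (q.ε / 3) q.G q.δ ∧
  (fun i => (ψ i).comp (AdL q.w)) ∈ BallP (fun i => (φ i).comp (AdL q.v)) q.G q.δ

/-- The order on `E_{A°}(φ̄, ψ̄)`: `p ≤ q` (`p` extends `q`). -/
def CondLE (p q : Cond A) : Prop :=
  q.F ⊆ p.F ∧ q.G ⊆ p.G ∧ p.ε ≤ q.ε ∧ p.δ ≤ q.δ ∧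
  ∀ b ∈ q.F,
    (max ‖p.v * b * star p.v - q.v * b * star q.v‖
         ‖star p.v * b * p.v - star q.v * b * q.v‖ ≤ q.ε - p.ε) ∧
    (max ‖p.w * b * star p.w - q.w * b * star q.w‖
         ‖star p.w * b * p.w - star q.w * b * q.w‖ ≤ q.ε - p.ε)

/-- Limit along a filter `𝔊` of conditions. -/
def GLim (𝔊 : Set (Cond A)) (f : Cond A → A) (L : A) : Prop :=
  ∀ ε : ℝ, 0 < ε → ∃ p ∈ 𝔊, ∀ q ∈ 𝔊, CondLE q p → ‖f q - L‖ < ε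

/-- A filter on the forcing notion `E_{A°}(φ̄, ψ̄)`. -/
def IsFilterOn {m : ℕ} (A₀ : Set A) (φ ψ : Fin m → (A →L[ℂ] ℂ))
    (𝔊 : Set (Cond A)) : Prop :=
  (∀ p ∈ 𝔊, IsCond A₀ φ ψ p) ∧
  (∀ p ∈ 𝔊, ∀ q : Cond A, IsCond A₀ φ ψ q → CondLE p q → q ∈ 𝔊) ∧
  (∀ p ∈ 𝔊, ∀ q ∈ 𝔊, ∃ r ∈ 𝔊, CondLE r p ∧ CondLE r q)

/-- An approximately inner map. -/
def ApproxInner (Φ : A → A) : Prop :=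
  ∀ (F : Finset A) (ε : ℝ), 0 < ε →
    ∃ u ∈ unitary A, ∀ a ∈ F, ‖Φ a - u * a * star u‖ < ε

end

open Filter Topology

section ConditionOrder

variable {A : Type*} [NormedRing A] [StarRing A]

theorem CondLE.refl (p : Cond A) : CondLE p p :=
  ⟨subset_rfl, subset_rfl, le_rfl, le_rfl, fun b _ => by simp⟩

theorem max_dist_le_add {E : Type*} [PseudoMetricSpace E] {x y z x' y' z' : E} {s t : ℝ}
    (h₁ : max (dist x y) (dist x' y') ≤ s) (h₂ : max (dist y z) (dist y' z') ≤ t) :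
    max (dist x z) (dist x' z') ≤ s + t := by
  simp only [max_le_iff] at *
  exact ⟨(dist_triangle x y z).trans (add_le_add h₁.1 h₂.1),
    (dist_triangle x' y' z').trans (add_le_add h₁.2 h₂.2)⟩

theorem CondLE.trans {p q r : Cond A} (hpq : CondLE p q) (hqr : CondLE q r) : CondLE p r := by
  obtain ⟨hF₁, hG₁, hε₁, hδ₁, hconj₁⟩ := hpq
  obtain ⟨hF₂, hG₂, hε₂, hδ₂, hconj₂⟩ := hqr
  refine ⟨hF₂.trans hF₁, hG₂.trans hG₁, hε₁.trans hε₂, hδ₁.trans hδ₂, fun b hb => ?_⟩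
  have hε : r.ε - p.ε = (q.ε - p.ε) + (r.ε - q.ε) := by ring
  simp only [← dist_eq_norm, hε] at *
  exact ⟨max_dist_le_add (hconj₁ b (hF₂ hb)).1 (hconj₂ b hb).1,
    max_dist_le_add (hconj₁ b (hF₂ hb)).2 (hconj₂ b hb).2⟩

def condTail (𝔊 : Set (Cond A)) : Filter (Cond A) :=
  ⨅ p ∈ 𝔊, 𝓟 {q | q ∈ 𝔊 ∧ CondLE q p}

variable {𝔊 : Set (Cond A)}

theorem condTail_hasBasis (hdir : DirectedOn (fun p q => CondLE q p) 𝔊)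
    (hne : 𝔊.Nonempty) :
    (condTail 𝔊).HasBasis (· ∈ 𝔊) fun p => {q | q ∈ 𝔊 ∧ CondLE q p} := by
  refine hasBasis_biInf_principal (fun p hp q hq => ?_) hne
  obtain ⟨r, hr, hrp, hrq⟩ := hdir p hp q hq
  exact ⟨r, hr, fun s hs => ⟨hs.1, hs.2.trans hrp⟩, fun s hs => ⟨hs.1, hs.2.trans hrq⟩⟩

theorem condTail_neBot (hdir : DirectedOn (fun p q => CondLE q p) 𝔊)
    (hne : 𝔊.Nonempty) : (condTail 𝔊).NeBot :=
  (condTail_hasBasis hdir hne).neBot_iff.2 fun {p} hp => ⟨p, hp, CondLE.refl p⟩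

theorem eventually_mem_condTail (hdir : DirectedOn (fun p q => CondLE q p) 𝔊)
    (hne : 𝔊.Nonempty) : ∀ᶠ q in condTail 𝔊, q ∈ 𝔊 :=
  (condTail_hasBasis hdir hne).eventually_iff.2 ⟨hne.some, hne.some_mem, fun _ hq => hq.1⟩

theorem gLim_iff_tendsto (hdir : DirectedOn (fun p q => CondLE q p) 𝔊)
    (hne : 𝔊.Nonempty) {f : Cond A → A} {L : A} :
    GLim 𝔊 f L ↔ Tendsto f (condTail 𝔊) (𝓝 L) := by
  rw [(condTail_hasBasis hdir hne).tendsto_iff Metric.nhds_basis_ball]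
  simp [GLim, dist_eq_norm]

theorem exists_tendsto_condTail {E : Type*} [PseudoMetricSpace E] [CompleteSpace E]
    (hdir : DirectedOn (fun p q => CondLE q p) 𝔊) (hne : 𝔊.Nonempty)
    {f : Cond A → E} (hf : ∀ ε > 0, ∃ p ∈ 𝔊, ∀ q ∈ 𝔊, CondLE q p → dist (f q) (f p) < ε) :
    ∃ L, Tendsto f (condTail 𝔊) (𝓝 L) := by
  have := condTail_neBot hdir hne
  refine CompleteSpace.complete (Metric.cauchy_iff.2 ⟨inferInstance, fun ε hε => ?_⟩)
  obtain ⟨p, hp, hpf⟩ := hf (ε / 2) (half_pos hε)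
  refine ⟨Metric.ball (f p) (ε / 2),
    (condTail_hasBasis hdir hne).mem_of_superset hp fun q hq => hpf q hq.1 hq.2,
    fun x hx y hy => ?_⟩
  linarith [dist_triangle_right x y (f p), Metric.mem_ball.1 hx, Metric.mem_ball.1 hy]

theorem exists_tendsto_condTail_of_lipschitz {E : Type*} [PseudoMetricSpace E] [CompleteSpace E]
    (hdir : DirectedOn (fun p q => CondLE q p) 𝔊) (hne : 𝔊.Nonempty)
    {A₀ : Set A} (hdense : Dense A₀) (hε_pos : ∀ q ∈ 𝔊, 0 < q.ε)
    (hgen : ∀ b ∈ A₀, ∀ ε > 0, ∃ p ∈ 𝔊, b ∈ p.F ∧ p.ε ≤ ε)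
    {T : Cond A → A → E} (hT : ∀ q ∈ 𝔊, LipschitzWith 1 (T q))
    (hclose : ∀ p q, CondLE q p → ∀ b ∈ p.F, dist (T q b) (T p b) ≤ p.ε - q.ε) (a : A) :
    ∃ L, Tendsto (fun q => T q a) (condTail 𝔊) (𝓝 L) := by
  refine exists_tendsto_condTail hdir hne fun ε hε => ?_
  obtain ⟨b, hb, hab⟩ := hdense.exists_dist_lt a (by positivity : 0 < ε / 3)
  obtain ⟨p, hp, hbp, hpε⟩ := hgen b hb (ε / 3) (by positivity)
  refine ⟨p, hp, fun q hq hqp => ?_⟩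
  have h₁ : dist (T q a) (T q b) < ε / 3 := by
    simpa using ((hT q hq).dist_le_mul a b).trans_lt (by simpa using hab)
  have h₂ : dist (T p b) (T p a) < ε / 3 := by
    simpa [dist_comm] using ((hT p hp).dist_le_mul a b).trans_lt (by simpa using hab)
  linarith [dist_triangle4 (T q a) (T q b) (T p b) (T p a), hclose p q hqp b hbp, hε_pos q hq]

end ConditionOrder

section Conjugation

variable {A : Type*} [NormedRing A] [StarRing A] [CStarRing A]
  {ι : Type*} {l : Filter ι} {u : ι → A}

theorem norm_conj_unitary {v : A} (hv : v ∈ unitary A) (a : A) : ‖v * a * star v‖ = ‖a‖ := by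
  rw [CStarRing.norm_mul_mem_unitary _ (Unitary.star_mem hv), CStarRing.norm_mem_unitary_mul _ hv]

theorem isometry_conj_unitary {v : A} (hv : v ∈ unitary A) : Isometry fun a => v * a * star v :=
  Isometry.of_dist_eq fun a b => by
    simp only [dist_eq_norm, ← sub_mul, ← mul_sub, norm_conj_unitary hv]

theorem isometry_conj_star_unitary {v : A} (hv : v ∈ unitary A) :
    Isometry fun a => star v * a * v := by
  simpa using isometry_conj_unitary (Unitary.star_mem hv)

theorem tendsto_conj_of_tendsto (hu : ∀ᶠ i in l, u i ∈ unitary A) {x : ι → A} {y z : A}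
    (hx : Tendsto x l (𝓝 y)) (h : Tendsto (fun i => u i * y * star (u i)) l (𝓝 z)) :
    Tendsto (fun i => u i * x i * star (u i)) l (𝓝 z) := by
  refine h.congr_dist ((tendsto_iff_dist_tendsto_zero.1 hx).congr' ?_)
  filter_upwards [hu] with i hi
  rw [(isometry_conj_unitary hi).dist_eq, dist_comm]

theorem tendsto_conj_star_of_tendsto (hu : ∀ᶠ i in l, u i ∈ unitary A) {a b : A}
    (h : Tendsto (fun i => u i * a * star (u i)) l (𝓝 b)) :
    Tendsto (fun i => star (u i) * b * u i) l (𝓝 a) := by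
  refine (tendsto_const_nhds (x := a)).congr_dist ((tendsto_iff_dist_tendsto_zero.1 h).congr' ?_)
  filter_upwards [hu] with i hi
  rw [← (isometry_conj_star_unitary hi).dist_eq (u i * a * star (u i)) b]
  simp [← mul_assoc, hi, mul_assoc _ (star (u i)) (u i)]

theorem norm_eq_of_tendsto_conj [l.NeBot] (hu : ∀ᶠ i in l, u i ∈ unitary A) {a b : A}
    (h : Tendsto (fun i => u i * a * star (u i)) l (𝓝 b)) : ‖b‖ = ‖a‖ := by
  refine tendsto_nhds_unique h.norm (tendsto_const_nhds.congr' ?_)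
  filter_upwards [hu] with i hi
  exact (norm_conj_unitary hi a).symm

theorem approxInner_of_tendsto_conj [l.NeBot] {v w : ι → A} (hv : ∀ᶠ i in l, v i ∈ unitary A)
    (hw : ∀ᶠ i in l, w i ∈ unitary A) {Φ Ψ : A → A}
    (hΦ : ∀ a, Tendsto (fun i => v i * a * star (v i)) l (𝓝 (Φ a)))
    (hΨ : ∀ a, Tendsto (fun i => star (w i) * a * w i) l (𝓝 (Ψ a))) :
    ApproxInner fun a => Φ (Ψ a) := by
  intro F ε hε
  have hconv : ∀ a, Tendsto (fun i => v i * star (w i) * a * star (v i * star (w i))) l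
      (𝓝 (Φ (Ψ a))) := fun a =>
    (tendsto_conj_of_tendsto hv (hΨ a) (hΦ (Ψ a))).congr fun i => by simp [mul_assoc]
  have hev : ∀ᶠ i in l, ∀ a ∈ F,
      ‖Φ (Ψ a) - v i * star (w i) * a * star (v i * star (w i))‖ < ε :=
    F.eventually_all.2 fun a _ => by
      simpa [dist_eq_norm'] using Metric.tendsto_nhds.1 (hconv a) ε hε
  obtain ⟨i, hi, hvi, hwi⟩ := (hev.and (hv.and hw)).exists
  exact ⟨_, mul_mem hvi (Unitary.star_mem hwi), hi⟩

variable [NormedAlgebra ℂ A]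

theorem isometry_of_tendsto_conj [l.NeBot] (hu : ∀ᶠ i in l, u i ∈ unitary A) (Φ : A ≃⋆ₐ[ℂ] A)
    (hΦ : ∀ a, Tendsto (fun i => u i * a * star (u i)) l (𝓝 (Φ a))) : Isometry Φ :=
  AddMonoidHomClass.isometry_of_norm Φ fun a => norm_eq_of_tendsto_conj hu (hΦ a)

theorem exists_starAlgEquiv_of_tendsto_conj [l.NeBot] (hu : ∀ᶠ i in l, u i ∈ unitary A)
    (hΦ : ∀ a, ∃ b, Tendsto (fun i => u i * a * star (u i)) l (𝓝 b))
    (hΨ : ∀ a, ∃ b, Tendsto (fun i => star (u i) * a * u i) l (𝓝 b)) :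
    ∃ Φ : A ≃⋆ₐ[ℂ] A, (∀ a, Tendsto (fun i => u i * a * star (u i)) l (𝓝 (Φ a))) ∧
      ∀ a, Tendsto (fun i => star (u i) * a * u i) l (𝓝 (Φ.symm a)) := by
  choose Φ hΦ using hΦ
  choose Ψ hΨ using hΨ
  have hu' : ∀ᶠ i in l, star (u i) ∈ unitary A := hu.mono fun i => Unitary.star_mem
  refine ⟨
    { toFun := Φ
      invFun := Ψ
      left_inv := fun a => tendsto_nhds_unique (hΨ _) (tendsto_conj_star_of_tendsto hu (hΦ a))
      right_inv := fun a => tendsto_nhds_unique (hΦ _) <| by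
        simpa using tendsto_conj_star_of_tendsto hu' (by simpa using hΨ a)
      map_mul' := fun a b => tendsto_nhds_unique (hΦ (a * b)) <|
        ((hΦ a).mul (hΦ b)).congr' <| hu.mono fun i hi => by
          simpa using (map_mul (Unitary.conjStarAlgAut ℂ A ⟨u i, hi⟩) a b).symm
      map_add' := fun a b => tendsto_nhds_unique (hΦ (a + b)) <|
        ((hΦ a).add (hΦ b)).congr fun i => by noncomm_ring
      map_star' := fun a => tendsto_nhds_unique (hΦ (star a)) <|
        (hΦ a).star.congr fun i => by simp [mul_assoc]
      map_smul' := fun c a => tendsto_nhds_unique (hΦ (c • a)) <|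
        ((hΦ a).const_smul c).congr fun i => by rw [mul_smul_comm, smul_mul_assoc] },
    hΦ, hΨ⟩

end Conjugation

section Conditions

variable {A : Type*} [NormedRing A] [StarRing A] [NormedAlgebra ℂ A] {A₀ : Set A} {m : ℕ}
  {φ ψ : Fin m → (A →L[ℂ] ℂ)} {q : Cond A}

theorem IsCond.ε_pos (hq : IsCond A₀ φ ψ q) : 0 < q.ε := hq.2.2.1

theorem IsCond.v_mem_unitary (hq : IsCond A₀ φ ψ q) : q.v ∈ unitary A := hq.2.2.2.2.1.1

theorem IsCond.w_mem_unitary (hq : IsCond A₀ φ ψ q) : q.w ∈ unitary A := hq.2.2.2.2.2.1.1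

theorem IsCond.norm_sub_lt (hq : IsCond A₀ φ ψ q) {b : A} (hb : b ∈ q.G) (i : Fin m) :
    ‖φ i (q.v * b * star q.v) - ψ i (q.w * b * star q.w)‖ < q.δ := by
  simpa [AdL, mul_assoc] using hq.2.2.2.2.2.2.2.2 b hb i

theorem apply_eq_of_tendsto_condTail
    {𝔊 : Set (Cond A)} (hdir : DirectedOn (fun p q => CondLE q p) 𝔊) (hne : 𝔊.Nonempty)
    (hcond : ∀ q ∈ 𝔊, IsCond A₀ φ ψ q) {b x y : A}
    (hb : ∀ δ > 0, ∃ p ∈ 𝔊, b ∈ p.G ∧ p.δ ≤ δ)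
    (hx : Tendsto (fun q => q.v * b * star q.v) (condTail 𝔊) (𝓝 x))
    (hy : Tendsto (fun q => q.w * b * star q.w) (condTail 𝔊) (𝓝 y)) (i : Fin m) :
    φ i x = ψ i y := by
  have := condTail_neBot hdir hne
  have hlim := (((φ i).continuous.tendsto x).comp hx).sub (((ψ i).continuous.tendsto y).comp hy)
  have hzero : Tendsto (fun q => φ i (q.v * b * star q.v) - ψ i (q.w * b * star q.w))
      (condTail 𝔊) (𝓝 0) := by
    refine Metric.tendsto_nhds.2 fun δ hδ => ?_
    obtain ⟨p, hp, hbp, hpδ⟩ := hb δ hδ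
    refine (condTail_hasBasis hdir hne).eventually_iff.2 ⟨p, hp, fun q ⟨hq, hqp⟩ => ?_⟩
    rw [dist_zero_right]
    exact ((hcond q hq).norm_sub_lt (hqp.2.1 hbp) i).trans_le (hqp.2.2.2.1.trans hpδ)
  exact sub_eq_zero.1 (tendsto_nhds_unique hlim hzero)

end Conditions

section Limits

variable {A : Type*} [NormedRing A] [StarRing A] [CStarRing A] [NormedAlgebra ℂ A]
  {𝔊 : Set (Cond A)}

theorem exists_starAlgEquiv_tendsto_condTail [CompleteSpace A]
    (hdir : DirectedOn (fun p q => CondLE q p) 𝔊) (hne : 𝔊.Nonempty)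
    {A₀ : Set A} (hdense : Dense A₀) (hε_pos : ∀ q ∈ 𝔊, 0 < q.ε)
    (hgen : ∀ b ∈ A₀, ∀ ε > 0, ∃ p ∈ 𝔊, b ∈ p.F ∧ p.ε ≤ ε)
    {u : Cond A → A} (hu : ∀ q ∈ 𝔊, u q ∈ unitary A)
    (hclose : ∀ p q, CondLE q p → ∀ b ∈ p.F,
      max ‖u q * b * star (u q) - u p * b * star (u p)‖
        ‖star (u q) * b * u q - star (u p) * b * u p‖ ≤ p.ε - q.ε) :
    ∃ Φ : A ≃⋆ₐ[ℂ] A,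
      (∀ a, Tendsto (fun q => u q * a * star (u q)) (condTail 𝔊) (𝓝 (Φ a))) ∧
      ∀ a, Tendsto (fun q => star (u q) * a * u q) (condTail 𝔊) (𝓝 (Φ.symm a)) := by
  have := condTail_neBot hdir hne
  refine exists_starAlgEquiv_of_tendsto_conj
    ((eventually_mem_condTail hdir hne).mono hu) (fun a => ?_) (fun a => ?_)
  · exact exists_tendsto_condTail_of_lipschitz hdir hne hdense hε_pos hgen
      (fun q hq => (isometry_conj_unitary (hu q hq)).lipschitz)
      (fun p q h b hb => by simpa [dist_eq_norm] using (max_le_iff.1 (hclose p q h b hb)).1) a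
  · exact exists_tendsto_condTail_of_lipschitz hdir hne hdense hε_pos hgen
      (fun q hq => (isometry_conj_star_unitary (hu q hq)).lipschitz)
      (fun p q h b hb => by simpa [dist_eq_norm] using (max_le_iff.1 (hclose p q h b hb)).2) a

theorem apply_eq_of_tendsto_condTail_of_dense {A₀ : Set A} {m : ℕ} {φ ψ : Fin m → (A →L[ℂ] ℂ)}
    (hdir : DirectedOn (fun p q => CondLE q p) 𝔊) (hne : 𝔊.Nonempty)
    (hdense : Dense A₀) (hcond : ∀ q ∈ 𝔊, IsCond A₀ φ ψ q)
    (hgen : ∀ b ∈ A₀, ∀ δ > 0, ∃ p ∈ 𝔊, b ∈ p.G ∧ p.δ ≤ δ) {ΦL ΦR : A ≃⋆ₐ[ℂ] A}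
    (hL : ∀ a, Tendsto (fun q => q.v * a * star q.v) (condTail 𝔊) (𝓝 (ΦL a)))
    (hR : ∀ a, Tendsto (fun q => q.w * a * star q.w) (condTail 𝔊) (𝓝 (ΦR a))) (i : Fin m)
    (a : A) : φ i (ΦL a) = ψ i (ΦR a) := by
  have := condTail_neBot hdir hne
  have hΦL := isometry_of_tendsto_conj
    ((eventually_mem_condTail hdir hne).mono fun q hq => (hcond q hq).v_mem_unitary) ΦL hL
  have hΦR := isometry_of_tendsto_conj
    ((eventually_mem_condTail hdir hne).mono fun q hq => (hcond q hq).w_mem_unitary) ΦR hR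
  have hcomp : (fun a => φ i (ΦL a)) = fun a => ψ i (ΦR a) :=
    Continuous.ext_on hdense ((φ i).continuous.comp hΦL.continuous)
      ((ψ i).continuous.comp hΦR.continuous)
      fun b hb => apply_eq_of_tendsto_condTail hdir hne hcond (hgen b hb) (hL b) (hR b) i
  exact congrFun hcomp a

end Limits

section

variable {A : Type*} [NormedRing A] [StarRing A] [CStarRing A]
  [NormedAlgebra ℂ A] [StarModule ℂ A] [CompleteSpace A]

theorem statement4_general
    (A₀ : Set A) (hA₀ : IsQiQSubalgebra A₀)
    {m : ℕ} (φ ψ : Fin m → (A →L[ℂ] ℂ))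
    (𝔊 : Set (Cond A)) (hfil : IsFilterOn A₀ φ ψ 𝔊)
    (hgen : ∀ F G : Finset A, ↑F ⊆ A₀ → ↑G ⊆ A₀ → ∀ ε δ : ℝ, 0 < ε → 0 < δ →
      ∃ p ∈ 𝔊, F ⊆ p.F ∧ G ⊆ p.G ∧ p.ε ≤ ε ∧ p.δ ≤ δ) :
    ∃ ΦL ΦR : A ≃⋆ₐ[ℂ] A,
      (∀ a : A, GLim 𝔊 (fun p => p.v * a * star p.v) (ΦL a)) ∧
      (∀ a : A, GLim 𝔊 (fun p => star p.v * a * p.v) (ΦL.symm a)) ∧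
      (∀ a : A, GLim 𝔊 (fun p => p.w * a * star p.w) (ΦR a)) ∧
      (∀ a : A, GLim 𝔊 (fun p => star p.w * a * p.w) (ΦR.symm a)) ∧
      ApproxInner (fun a => ΦL (ΦR.symm a)) ∧
      (∀ (i : Fin m) (a : A), φ i (ΦL (ΦR.symm a)) = ψ i a) := by
  obtain ⟨hcond, -, hdir⟩ := hfil
  have hne : 𝔊.Nonempty :=
    let ⟨p, hp, _⟩ := hgen ∅ ∅ (by simp) (by simp) 1 1 one_pos one_pos; ⟨p, hp⟩
  have hgenF : ∀ b ∈ A₀, ∀ ε > 0, ∃ p ∈ 𝔊, b ∈ p.F ∧ p.ε ≤ ε := fun b hb ε hε =>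
    let ⟨p, hp, hF, _, hpε, _⟩ := hgen {b} ∅ (by simpa) (by simp) ε 1 hε one_pos
    ⟨p, hp, hF (Finset.mem_singleton_self b), hpε⟩
  have hgenG : ∀ b ∈ A₀, ∀ δ > 0, ∃ p ∈ 𝔊, b ∈ p.G ∧ p.δ ≤ δ := fun b hb δ hδ =>
    let ⟨p, hp, _, hG, _, hpδ⟩ := hgen ∅ {b} (by simp) (by simpa) 1 δ one_pos hδ
    ⟨p, hp, hG (Finset.mem_singleton_self b), hpδ⟩
  have hε : ∀ q ∈ 𝔊, 0 < q.ε := fun q hq => (hcond q hq).ε_pos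
  obtain ⟨ΦL, hL, hLsymm⟩ := exists_starAlgEquiv_tendsto_condTail hdir hne hA₀.dense hε hgenF
    (fun q hq => (hcond q hq).v_mem_unitary) fun p q h b hb => (h.2.2.2.2 b hb).1
  obtain ⟨ΦR, hR, hRsymm⟩ := exists_starAlgEquiv_tendsto_condTail hdir hne hA₀.dense hε hgenF
    (fun q hq => (hcond q hq).w_mem_unitary) fun p q h b hb => (h.2.2.2.2 b hb).2
  have := condTail_neBot hdir hne
  have hev := eventually_mem_condTail hdir hne
  refine ⟨ΦL, ΦR, fun a => (gLim_iff_tendsto hdir hne).2 (hL a),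
    fun a => (gLim_iff_tendsto hdir hne).2 (hLsymm a),
    fun a => (gLim_iff_tendsto hdir hne).2 (hR a),
    fun a => (gLim_iff_tendsto hdir hne).2 (hRsymm a),
    approxInner_of_tendsto_conj (hev.mono fun q hq => (hcond q hq).v_mem_unitary)
      (hev.mono fun q hq => (hcond q hq).w_mem_unitary) hL hRsymm, fun i a => ?_⟩
  rw [apply_eq_of_tendsto_condTail_of_dense hdir hne hA₀.dense hcond hgenG hL hR,
    StarAlgEquiv.apply_symm_apply]

/-- Theorem 3.5(1): a sufficiently generic filter `𝔊` on `E_{A°}(φ̄, ψ̄)` yields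
norm limits `Φ_L(a) = lim_{p ∈ 𝔊} v_p a v_p*`, `Φ_R(a) = lim_{p ∈ 𝔊} w_p a w_p*`
which are *-automorphisms of `A` (with the indicated inverses), such that
`Φ_𝔊 := Φ_L ∘ Φ_R⁻¹` is approximately inner and `φ_i ∘ Φ_𝔊 = ψ_i` for all `i < m`. -/
theorem statement4
    (hsimple : IsSimpleCStar A) (hinf : ¬ FiniteDimensional ℂ A)
    (A₀ : Set A) (hA₀ : IsQiQSubalgebra A₀)
    {m : ℕ} (hm : 1 ≤ m) (φ ψ : Fin m → (A →L[ℂ] ℂ))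
    (hφ : IsPmTuple φ) (hψ : IsPmTuple ψ)
    (𝔊 : Set (Cond A)) (hfil : IsFilterOn A₀ φ ψ 𝔊)
    (hgen : ∀ F G : Finset A, ↑F ⊆ A₀ → ↑G ⊆ A₀ → ∀ ε δ : ℝ, 0 < ε → 0 < δ →
      ∃ p ∈ 𝔊, F ⊆ p.F ∧ G ⊆ p.G ∧ p.ε ≤ ε ∧ p.δ ≤ δ) :
    ∃ ΦL ΦR : A ≃⋆ₐ[ℂ] A,
      (∀ a : A, GLim 𝔊 (fun p => p.v * a * star p.v) (ΦL a)) ∧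
      (∀ a : A, GLim 𝔊 (fun p => star p.v * a * p.v) (ΦL.symm a)) ∧
      (∀ a : A, GLim 𝔊 (fun p => p.w * a * star p.w) (ΦR a)) ∧
      (∀ a : A, GLim 𝔊 (fun p => star p.w * a * p.w) (ΦR.symm a)) ∧
      ApproxInner (fun a => ΦL (ΦR.symm a)) ∧
      (∀ (i : Fin m) (a : A), φ i (ΦL (ΦR.symm a)) = ψ i a) :=
  statement4_general A₀ hA₀ φ ψ 𝔊 hfil hgen

end
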